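/- Let X be a Banach space and C a convex weak-star compact subset of B_{X*} such that every convex combination of slices of C has diameter 2. Then K = co(C ∪ (−C)) is a weak-star compact convex subset of B_{X*} such that every convex combination of slices of K has diameter 2. -/

import Mathlib

/-!
A slice of `K = co(C ∪ -C)` cannot miss both `C` and `-C`, since otherwise the closed half-space
`{φ ≤ β}` would contain `C ∪ -C` and hence `K`. So every slice of `K` contains a slice `S` of `C`
or the reflection `-S` of one; as `(-S) - (-S) = S - S`, the difference set of a convex
combination of slices of `K` contains that of a convex combination of slices of `C`, whose
diameter is `2`. For weak-star compactness, with `D` the (compact, convex) weak-star copy of `C`,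
`co(D ∪ -D)` is the continuous image of `[0, 1] × D × (-D)`.
-/

open scoped BigOperators
open Metric

noncomputable section

/-- The convex combination `∑ lam i • S i` of sets. -/
def ccomb {E : Type*} [AddCommMonoid E] [Module ℝ E] {n : ℕ}
    (lam : Fin n → ℝ) (S : Fin n → Set E) : Set E :=
  {y | ∃ f : Fin n → E, (∀ i, f i ∈ S i) ∧ y = ∑ i, lam i • f i}

/-- A slice of a set `A ⊆ X*`: a nonempty intersection of `A` with an open half-space
determined by a functional `φ` on `X*` and a level `β`. -/
def setSlice {X : Type*} [NormedAddCommGroup X] [NormedSpace ℝ X]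
    (A : Set (StrongDual ℝ X))
    (φ : StrongDual ℝ (StrongDual ℝ X)) (β : ℝ) :
    Set (StrongDual ℝ X) :=
  {f ∈ A | β < φ f}

section Symmetrization

open scoped Pointwise
open Set

section Compact

variable {E : Type*} [AddCommGroup E] [Module ℝ E] {s t : Set E}

lemma convexJoin_eq_image :
    convexJoin ℝ s t =
      (fun p : ℝ × E × E => (1 - p.1) • p.2.1 + p.1 • p.2.2) '' (Icc 0 1 ×ˢ s ×ˢ t) := by
  ext z
  simp only [mem_convexJoin, segment_eq_image, mem_image, mem_prod, Prod.exists]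
  constructor
  · rintro ⟨x, hx, y, hy, θ, hθ, rfl⟩
    exact ⟨θ, x, y, ⟨hθ, hx, hy⟩, rfl⟩
  · rintro ⟨θ, x, y, ⟨hθ, hx, hy⟩, rfl⟩
    exact ⟨x, hx, y, hy, θ, hθ, rfl⟩

variable [TopologicalSpace E] [ContinuousAdd E] [ContinuousSMul ℝ E]

lemma IsCompact.convexJoin (hs : IsCompact s) (ht : IsCompact t) :
    IsCompact (convexJoin ℝ s t) := by
  rw [convexJoin_eq_image]
  exact (isCompact_Icc.prod (hs.prod ht)).image (by fun_prop)

lemma IsCompact.convexHull_union (hs : IsCompact s) (ht : IsCompact t)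
    (hsc : Convex ℝ s) (htc : Convex ℝ t) : IsCompact (convexHull ℝ (s ∪ t)) := by
  rcases s.eq_empty_or_nonempty with rfl | hs_ne
  · rwa [empty_union, htc.convexHull_eq]
  rcases t.eq_empty_or_nonempty with rfl | ht_ne
  · rwa [union_empty, hsc.convexHull_eq]
  rw [_root_.convexHull_union hs_ne ht_ne, hsc.convexHull_eq, htc.convexHull_eq]
  exact hs.convexJoin ht

end Compact

lemma LinearMap.image_convexHull_union_neg {E F : Type*} [AddCommGroup E] [Module ℝ E]
    [AddCommGroup F] [Module ℝ F] (f : E →ₗ[ℝ] F) (s : Set E) :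
    f '' convexHull ℝ (s ∪ -s) = convexHull ℝ (f '' s ∪ -(f '' s)) := by
  rw [f.image_convexHull, image_union,
    image_neg_of_apply_neg_eq_neg fun x _ => map_neg f x]

section ConvexCombination

variable {E : Type*} [AddCommGroup E] [Module ℝ E] {n : ℕ} {lam : Fin n → ℝ}

lemma ccomb_mono {S T : Fin n → Set E} (h : ∀ i, S i ⊆ T i) : ccomb lam S ⊆ ccomb lam T := by
  rintro y ⟨f, hf, rfl⟩
  exact ⟨f, fun i => h i (hf i), rfl⟩

lemma ccomb_sub_ccomb (S T : Fin n → Set E) :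
    ccomb lam S - ccomb lam T = ccomb lam (fun i => S i - T i) := by
  ext z
  constructor
  · rintro ⟨_, ⟨f, hf, rfl⟩, _, ⟨g, hg, rfl⟩, rfl⟩
    refine ⟨f - g, fun i => sub_mem_sub (hf i) (hg i), ?_⟩
    simp only [Pi.sub_apply, smul_sub, Finset.sum_sub_distrib]
  · rintro ⟨h, hh, rfl⟩
    choose f hf g hg hfg using hh
    refine ⟨_, ⟨f, hf, rfl⟩, _, ⟨g, hg, rfl⟩, ?_⟩
    simp only [← Finset.sum_sub_distrib, ← smul_sub, hfg]

lemma Convex.ccomb_subset {B : Set E} (hB : Convex ℝ B) (hlam : ∀ i, 0 ≤ lam i)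
    (hsum : ∑ i, lam i = 1) {S : Fin n → Set E} (hS : ∀ i, S i ⊆ B) : ccomb lam S ⊆ B := by
  rintro y ⟨f, hf, rfl⟩
  exact hB.sum_mem (fun i _ => hlam i) hsum fun i _ => hS i (hf i)

end ConvexCombination

lemma diam_le_diam_of_sub_subset_sub {E : Type*} [SeminormedAddCommGroup E] {s t : Set E}
    (ht : Bornology.IsBounded t) (h : s - s ⊆ t - t) : diam s ≤ diam t := by
  refine diam_le_of_forall_dist_le diam_nonneg fun x hx y hy => ?_
  obtain ⟨a, ha, b, hb, hab⟩ := h (sub_mem_sub hx hy)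
  rw [dist_eq_norm, ← hab, ← dist_eq_norm]
  exact dist_le_diam_of_mem ht ha hb

section Slices

variable {X : Type*} [NormedAddCommGroup X] [NormedSpace ℝ X]
  {A B : Set (StrongDual ℝ X)} {φ : StrongDual ℝ (StrongDual ℝ X)} {β : ℝ}

lemma setSlice_mono (h : A ⊆ B) : setSlice A φ β ⊆ setSlice B φ β :=
  fun _ hf => ⟨h hf.1, hf.2⟩

lemma neg_setSlice_neg : -setSlice A (-φ) β = setSlice (-A) φ β := by
  ext f
  simp [setSlice]

lemma setSlice_nonempty_or_neg_of_convexHull_union_neg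
    (h : (setSlice (convexHull ℝ (A ∪ -A)) φ β).Nonempty) :
    (setSlice A φ β).Nonempty ∨ (setSlice A (-φ) β).Nonempty := by
  obtain ⟨f, hfK, hf⟩ := h
  by_contra! hA
  have hle : A ∪ -A ⊆ {g | φ g ≤ β} := by
    rintro g (hg | hg) <;> rw [mem_ofPred_eq] <;> by_contra! hlt
    · exact hA.1.subset ⟨hg, hlt⟩
    · exact hA.2.subset (show -g ∈ setSlice A (-φ) β from ⟨hg, by simpa using hlt⟩)
  exact (convexHull_min hle (convex_halfSpace_le φ.toLinearMap.isLinear β) hfK).not_gt hf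

lemma exists_setSlice_sub_subset_of_convexHull_union_neg
    (h : (setSlice (convexHull ℝ (A ∪ -A)) φ β).Nonempty) :
    ∃ ψ, (setSlice A ψ β).Nonempty ∧
      setSlice A ψ β - setSlice A ψ β ⊆
        setSlice (convexHull ℝ (A ∪ -A)) φ β - setSlice (convexHull ℝ (A ∪ -A)) φ β := by
  have hA : A ⊆ convexHull ℝ (A ∪ -A) := subset_union_left.trans (subset_convexHull ℝ _)
  have hnegA : -A ⊆ convexHull ℝ (A ∪ -A) := subset_union_right.trans (subset_convexHull ℝ _)
  rcases setSlice_nonempty_or_neg_of_convexHull_union_neg h with hφ | hnegφ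
  · exact ⟨φ, hφ, sub_subset_sub (setSlice_mono hA) (setSlice_mono hA)⟩
  · refine ⟨-φ, hnegφ, ?_⟩
    rw [← neg_sub_neg, neg_setSlice_neg]
    exact sub_subset_sub (setSlice_mono hnegA) (setSlice_mono hnegA)

end Slices

end Symmetrization

open Set

theorem symmetrization_preserves_ccomb_slices_diam_two_general
    (X : Type*) [NormedAddCommGroup X] [NormedSpace ℝ X]
    (C : Set (StrongDual ℝ X))
    (hCconv : Convex ℝ C) (hCball : C ⊆ closedBall 0 1)
    (hCcomp : IsCompact ((fun f => StrongDual.toWeakDual f) '' C))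
    (hC : ∀ (n : ℕ) (lam : Fin n → ℝ), (∀ i, 0 < lam i) → ∑ i, lam i = 1 →
      ∀ (φ : Fin n → StrongDual ℝ (StrongDual ℝ X)) (β : Fin n → ℝ),
      (∀ i, (setSlice C (φ i) (β i)).Nonempty) →
      Metric.diam (ccomb lam (fun i => setSlice C (φ i) (β i))) = 2) :
    Convex ℝ (convexHull ℝ (C ∪ -C)) ∧
    convexHull ℝ (C ∪ -C) ⊆ closedBall 0 1 ∧
    IsCompact ((fun f => StrongDual.toWeakDual f) '' (convexHull ℝ (C ∪ -C))) ∧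
    (∀ (n : ℕ) (lam : Fin n → ℝ), (∀ i, 0 < lam i) → ∑ i, lam i = 1 →
      ∀ (φ : Fin n → StrongDual ℝ (StrongDual ℝ X)) (β : Fin n → ℝ),
      (∀ i, (setSlice (convexHull ℝ (C ∪ -C)) (φ i) (β i)).Nonempty) →
      Metric.diam
        (ccomb lam (fun i => setSlice (convexHull ℝ (C ∪ -C)) (φ i) (β i))) = 2) := by
  have hKball : convexHull ℝ (C ∪ -C) ⊆ closedBall 0 1 :=
    convexHull_min (union_subset hCball (neg_subset.2 (by simpa using hCball)))
      (convex_closedBall 0 1)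
  refine ⟨convex_convexHull ℝ _, hKball, ?_, ?_⟩
  · change IsCompact (StrongDual.toWeakDual.toLinearMap '' _)
    rw [LinearMap.image_convexHull_union_neg]
    exact hCcomp.convexHull_union hCcomp.neg (hCconv.linear_image _) (hCconv.linear_image _).neg
  intro n lam hpos hsum φ β hne
  choose ψ hψ hsub using fun i => exists_setSlice_sub_subset_of_convexHull_union_neg (hne i)
  have hball : ccomb lam (fun i => setSlice (convexHull ℝ (C ∪ -C)) (φ i) (β i)) ⊆
      closedBall 0 1 :=
    (convex_closedBall 0 1).ccomb_subset (fun i => (hpos i).le) hsum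
      fun i => (sep_subset _ _).trans hKball
  refine le_antisymm ?_ ?_
  · exact (diam_mono hball isBounded_closedBall).trans (by simpa using diam_closedBall zero_le_one)
  · rw [← hC n lam hpos hsum ψ β hψ]
    refine diam_le_diam_of_sub_subset_sub (isBounded_closedBall.subset hball) ?_
    rw [ccomb_sub_ccomb, ccomb_sub_ccomb]
    exact ccomb_mono hsub

theorem symmetrization_preserves_ccomb_slices_diam_two
    (X : Type*) [NormedAddCommGroup X] [NormedSpace ℝ X] [CompleteSpace X]
    (C : Set (StrongDual ℝ X))
    (hCconv : Convex ℝ C) (hCball : C ⊆ closedBall 0 1)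
    (hCcomp : IsCompact ((fun f => StrongDual.toWeakDual f) '' C))
    (hC : ∀ (n : ℕ) (lam : Fin n → ℝ), (∀ i, 0 < lam i) → ∑ i, lam i = 1 →
      ∀ (φ : Fin n → StrongDual ℝ (StrongDual ℝ X)) (β : Fin n → ℝ),
      (∀ i, (setSlice C (φ i) (β i)).Nonempty) →
      Metric.diam (ccomb lam (fun i => setSlice C (φ i) (β i))) = 2) :
    Convex ℝ (convexHull ℝ (C ∪ -C)) ∧
    convexHull ℝ (C ∪ -C) ⊆ closedBall 0 1 ∧
    IsCompact ((fun f => StrongDual.toWeakDual f) '' (convexHull ℝ (C ∪ -C))) ∧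
    (∀ (n : ℕ) (lam : Fin n → ℝ), (∀ i, 0 < lam i) → ∑ i, lam i = 1 →
      ∀ (φ : Fin n → StrongDual ℝ (StrongDual ℝ X)) (β : Fin n → ℝ),
      (∀ i, (setSlice (convexHull ℝ (C ∪ -C)) (φ i) (β i)).Nonempty) →
      Metric.diam
        (ccomb lam (fun i => setSlice (convexHull ℝ (C ∪ -C)) (φ i) (β i))) = 2) :=
  symmetrization_preserves_ccomb_slices_diam_two_general X C hCconv hCball hCcomp hC
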